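/- arXiv:2207.09873 — 4 statements merged into one kernel-verified Lean document; each statement's English description precedes it below -/
import Mathlib

section
/- For s ∈ (1/2, 1), the foraging success functional Φ₀(s;κ,T) := ∫₀^T u(0,t) dt, where u is the fractional heat kernel with diffusion coefficient κ > 0, equals T^{(2s−1)/(2s)} Γ(1/(2s)) / (πκ(2s−1)). -/
open Real Set Filter MeasureTheory

/-- The one-dimensional fractional heat kernel with diffusion coefficient `κ`. -/
noncomputable def fracHeatKernel (s κ x t : ℝ) : ℝ :=
  ∫ ξ : ℝ, Real.exp (-(|2*π*κ*ξ|^(2*s)) * t) * Real.cos (2*π*x*ξ)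

theorem stmt3 (s κ T : ℝ) (hs : s ∈ Set.Ioo (1/2:ℝ) 1) (hκ : 0 < κ) (hT : 0 < T) :
    ∫ t in Set.Ioo (0:ℝ) T, fracHeatKernel s κ 0 t
      = T^((2*s-1)/(2*s)) * Real.Gamma (1/(2*s)) / (π*κ*(2*s-1)) := by
  obtain ⟨hs1, hs2⟩ := hs
  have hπ : (0:ℝ) < π := Real.pi_pos
  have hc : (0:ℝ) < 2*π*κ := by positivity
  have hp : (0:ℝ) < 2*s := by linarith
  have key : ∀ t ∈ Set.Ioo (0:ℝ) T, fracHeatKernel s κ 0 t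
      = (2 * (2*π*κ)⁻¹ * Real.Gamma (1/(2*s)+1)) * t ^ (-1/(2*s)) := by
    intro t ht
    have ht0 : 0 < t := ht.1
    unfold fracHeatKernel
    have h1 : (∫ ξ : ℝ, Real.exp (-(|2*π*κ*ξ|^(2*s)) * t) * Real.cos (2*π*0*ξ))
        = ∫ ξ : ℝ, (fun x => Real.exp (-t * ((2*π*κ)*x)^(2*s))) |ξ| := by
      congr 1
      funext ξ
      simp only [mul_zero, zero_mul, Real.cos_zero, mul_one]
      rw [show |2*π*κ*ξ| = (2*π*κ) * |ξ| by rw [abs_mul, abs_of_pos hc]]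
      congr 1
      ring
    rw [h1, integral_comp_abs (f := fun x => Real.exp (-t * ((2*π*κ)*x)^(2*s))),
      integral_comp_mul_left_Ioi (fun x => Real.exp (-t * x^(2*s))) 0 hc, mul_zero,
      integral_exp_neg_mul_rpow hp ht0, smul_eq_mul]
    ring
  rw [setIntegral_congr_fun measurableSet_Ioo key,
    ← MeasureTheory.integral_Ioc_eq_integral_Ioo,
    ← intervalIntegral.integral_of_le hT.le,
    intervalIntegral.integral_const_mul]
  have hr : (-1:ℝ) < -1/(2*s) := by
    have h1 : 1/(2*s) < 1 := by rw [div_lt_one hp]; linarith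
    have h2 : -1/(2*s) = -(1/(2*s)) := by ring
    rw [h2]; linarith
  rw [integral_rpow (Or.inl hr)]
  have hne : -1/(2*s) + 1 ≠ 0 := by
    have : (0:ℝ) < -1/(2*s) + 1 := by linarith
    linarith
  rw [Real.zero_rpow hne, sub_zero]
  have hexp : T ^ (-1/(2*s) + 1) = T ^ ((2*s-1)/(2*s)) := by
    congr 1
    field_simp
    ring
  rw [hexp, Real.Gamma_add_one (by positivity : 1/(2*s) ≠ 0)]
  have hs0 : s ≠ 0 := by positivity
  have h2s1 : (0:ℝ) < 2*s - 1 := by linarith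
  rw [show -1/(2*s) + 1 = (2*s-1)/(2*s) by field_simp; ring, div_div_eq_mul_div]
  rw [eq_div_iff (by positivity : π*κ*(2*s-1) ≠ 0)]
  field_simp
end

section
/- For s ∈ (1/2, 1), 0 < −2ζ(−2s) ≤ 1/3, where ζ denotes the Riemann zeta function extended by analytic continuation; equivalently, the function h(s) := −2ζ(−2s) satisfies ln h(s) ≤ ln(1/3) < 0 on (1/2,1). -/
open Real Set Filter

/-- The Riemann zeta function restricted to real arguments
(analytic continuation, real part). -/
noncomputable def zetaR (x : ℝ) : ℝ := (riemannZeta (x : ℂ)).re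

lemma zeta_real_eq (x : ℝ) (hx : 1 < x) :
    riemannZeta (x : ℂ) = ((∑' n : ℕ, 1 / (n : ℝ) ^ x : ℝ) : ℂ) := by
  rw [zeta_eq_tsum_one_div_nat_cpow (by simpa using hx), Complex.ofReal_tsum]
  congr 1; ext n
  have h : ((n : ℂ)) = (((n : ℝ)) : ℂ) := by norm_cast
  rw [h, ← Complex.ofReal_cpow (Nat.cast_nonneg n) x, Complex.ofReal_div, Complex.ofReal_one]

lemma zeta_tsum_pos (x : ℝ) (hx : 1 < x) : 0 < ∑' n : ℕ, 1 / (n : ℝ) ^ x := by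
  have hsum : Summable (fun n : ℕ ↦ 1 / (n : ℝ) ^ x) :=
    summable_one_div_nat_rpow.mpr hx
  refine Summable.tsum_pos hsum (fun n ↦ by positivity) 1 ?_
  simp [Real.one_rpow]

lemma zeta_tsum_le (x : ℝ) (hx : 2 ≤ x) :
    (∑' n : ℕ, 1 / (n : ℝ) ^ x) ≤ π ^ 2 / 6 := by
  rw [← hasSum_zeta_two.tsum_eq]
  refine Summable.tsum_le_tsum (fun n ↦ ?_) (summable_one_div_nat_rpow.mpr (by linarith))
    hasSum_zeta_two.summable
  rcases Nat.eq_zero_or_pos n with h0 | h1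
  · subst h0
    simp [Real.zero_rpow (by positivity : x ≠ 0)]
  · have hn : (1 : ℝ) ≤ (n : ℝ) := by exact_mod_cast h1
    have : (n : ℝ) ^ (2 : ℕ) ≤ (n : ℝ) ^ x := by
      rw [← Real.rpow_natCast (n : ℝ) 2]
      exact Real.rpow_le_rpow_of_exponent_le hn (by exact_mod_cast hx)
    exact div_le_div_of_nonneg_left one_pos.le (by positivity) this

theorem stmt5 (s : ℝ) (hs : s ∈ Set.Ioo (1/2:ℝ) 1) :
    0 < -2 * zetaR (-2*s) ∧ -2 * zetaR (-2*s) ≤ 1/3 := by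
  obtain ⟨hs1, hs2⟩ := hs
  set w : ℝ := 1 + 2 * s with hw
  have hw2 : 2 ≤ w := by simp only [hw]; linarith
  have hw1 : 1 < w := by linarith
  set Z : ℝ := ∑' n : ℕ, 1 / (n : ℝ) ^ w with hZ
  -- functional equation
  have hne : ∀ n : ℕ, (w : ℂ) ≠ -n := by
    intro n h
    have : w = -(n : ℝ) := by exact_mod_cast h
    have : (0:ℝ) ≤ (n : ℝ) := Nat.cast_nonneg n
    linarith
  have hne1 : (w : ℂ) ≠ 1 := by
    intro h
    have : w = 1 := by exact_mod_cast h
    linarith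
  have hfe := riemannZeta_one_sub hne hne1
  have harg : (1 : ℂ) - w = ((-2 * s : ℝ) : ℂ) := by simp only [hw]; push_cast; ring
  rw [harg] at hfe
  -- express RHS as real
  have hcos : Complex.cos (π * w / 2) = ((-Real.sin (π * s) : ℝ) : ℂ) := by
    have : (π * (w:ℂ) / 2) = (((π * w / 2 : ℝ)) : ℂ) := by push_cast; ring
    rw [this, ← Complex.ofReal_cos]
    norm_cast
    have : π * w / 2 = π / 2 + π * s := by rw [hw]; ring
    rw [this, Real.cos_add]; simp
  have hpow : ((2 : ℂ) * π) ^ (-(w : ℂ)) = (((2 * π) ^ (-w) : ℝ) : ℂ) := by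
    rw [Complex.ofReal_cpow (by positivity) (-w)]
    push_cast
    ring_nf
  have hGamma : Complex.Gamma (w : ℂ) = ((Real.Gamma w : ℝ) : ℂ) :=
    Complex.Gamma_ofReal w
  rw [hpow, hGamma, hcos, zeta_real_eq w hw1] at hfe
  have hre : zetaR (-2 * s) =
      2 * (2 * π) ^ (-w) * Real.Gamma w * (-Real.sin (π * s)) * Z := by
    have h2 : riemannZeta ((-2 * s : ℝ) : ℂ) =
        ((2 * (2 * π) ^ (-w) * Real.Gamma w * (-Real.sin (π * s)) * Z : ℝ) : ℂ) := by
      rw [hfe, ← hZ]; norm_cast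
    rw [zetaR, h2, Complex.ofReal_re]
  have hval : -2 * zetaR (-2 * s) =
      4 * (2 * π) ^ (-w) * Real.Gamma w * Real.sin (π * s) * Z := by
    rw [hre]; ring
  -- bounds on factors
  have hGpos : 0 < Real.Gamma w := Real.Gamma_pos_of_pos (by linarith)
  have hsinpos : 0 < Real.sin (π * s) := by
    apply Real.sin_pos_of_pos_of_lt_pi
    · positivity
    · nlinarith [Real.pi_pos]
  have hZpos : 0 < Z := zeta_tsum_pos w hw1
  have hppos : (0:ℝ) < (2 * π) ^ (-w) := by positivity
  constructor
  · rw [hval]; positivity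
  · rw [hval]
    have hG3 : Real.Gamma w ≤ 2 := by
      have h3 : Real.Gamma 3 = 2 := by
        have := Real.Gamma_nat_eq_factorial 2
        norm_num at this
        convert this using 2 <;> norm_num
      rcases eq_or_lt_of_le hw2 with h | h
      · rw [← h]
        have : Real.Gamma 2 = 1 := by
          have := Real.Gamma_nat_eq_factorial 1
          norm_num at this
          convert this using 2 <;> norm_num
        rw [this]; norm_num
      · have hw3 : w < 3 := by rw [hw]; linarith
        have := Real.Gamma_strictMonoOn_Ici (a := w) (b := 3)
          (by simp; linarith) (by simp; norm_num) hw3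
        rw [h3] at this
        linarith
    have hsin1 : Real.sin (π * s) ≤ 1 := Real.sin_le_one _
    have hple : (2 * π) ^ (-w) ≤ (2 * π) ^ (-(2:ℝ)) := by
      apply Real.rpow_le_rpow_of_exponent_le (by nlinarith [Real.pi_gt_three])
      linarith
    have hZle : Z ≤ π ^ 2 / 6 := zeta_tsum_le w hw2
    have hpval : (2 * π) ^ (-(2:ℝ)) = 1 / (4 * π ^ 2) := by
      rw [Real.rpow_neg (by positivity), Real.rpow_two]
      field_simp
      ring
    calc 4 * (2 * π) ^ (-w) * Real.Gamma w * Real.sin (π * s) * Z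
        ≤ 4 * (1 / (4 * π ^ 2)) * 2 * 1 * (π ^ 2 / 6) := by
          rw [← hpval]
          have h1 : 4 * (2 * π) ^ (-w) * Real.Gamma w * Real.sin (π * s) * Z
              ≤ 4 * (2 * π) ^ (-(2:ℝ)) * 2 * 1 * (π ^ 2 / 6) := by
            apply mul_le_mul
            · apply mul_le_mul
              · apply mul_le_mul
                · exact mul_le_mul_of_nonneg_left hple (by norm_num)
                · exact hG3
                · exact hGpos.le
                · positivity
              · exact hsin1
              · exact hsinpos.le
              · positivity
            · exact hZle
            · exact hZpos.le
            · positivity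
          exact h1
      _ = 1/3 := by
          have hπ : π ^ 2 ≠ 0 := by positivity
          field_simp
          ring
end

section
/- The function h(s) := −2ζ(−2s) is strictly decreasing on (1/2, 1), where ζ is the Riemann zeta function (analytically continued). -/
open Real Set Filter

/-! ### Auxiliary lemmas -/

lemma zetaR_tsum_aux {x : ℝ} (hx : 1 < x) :
    riemannZeta (x : ℂ) = ((∑' n : ℕ, 1 / (n : ℝ) ^ x : ℝ) : ℂ) := by
  rw [zeta_eq_tsum_one_div_nat_cpow (by simpa using hx), Complex.ofReal_tsum]
  congr 1
  ext n
  rw [Complex.ofReal_div, Complex.ofReal_one, Complex.ofReal_cpow (Nat.cast_nonneg n)]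
  norm_num

lemma zetaR_eq_tsum {x : ℝ} (hx : 1 < x) :
    zetaR x = ∑' n : ℕ, 1 / (n : ℝ) ^ x := by
  rw [zetaR, zetaR_tsum_aux hx, Complex.ofReal_re]

lemma zeta_ofReal {x : ℝ} (hx : 1 < x) :
    riemannZeta (x : ℂ) = ((zetaR x : ℝ) : ℂ) := by
  rw [zetaR_eq_tsum hx, zetaR_tsum_aux hx]

lemma zetaR_pos {x : ℝ} (hx : 1 < x) : 0 < zetaR x := by
  rw [zetaR_eq_tsum hx]
  refine Summable.tsum_pos (summable_one_div_nat_rpow.mpr hx) (fun n => by positivity) 1 ?_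
  norm_num

lemma zetaR_hasDerivAt {x : ℝ} (hx : 1 < x) :
    ∃ d : ℝ, d < 0 ∧ HasDerivAt zetaR d x := by
  have habs : LSeries.abscissaOfAbsConv 1 < (x : ℂ).re := by
    rw [LSeries.abscissaOfAbsConv_one, Complex.ofReal_re]
    exact_mod_cast hx
  have hopen : IsOpen {z : ℂ | 1 < z.re} := isOpen_lt continuous_const Complex.continuous_re
  have hz : HasDerivAt riemannZeta (-(LSeries (LSeries.logMul 1) (x : ℂ))) (x : ℂ) := by
    refine (LSeries_hasDerivAt habs).congr_of_eventuallyEq ?_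
    filter_upwards [hopen.mem_nhds (by simpa using hx)] with z hz
    exact (LSeries_one_eq_riemannZeta hz).symm
  have hre : HasDerivAt (fun y : ℝ => (riemannZeta (y : ℂ)).re)
      (-(LSeries (LSeries.logMul 1) (x : ℂ))).re x := hz.real_of_complex
  refine ⟨_, ?_, hre⟩
  rw [Complex.neg_re, neg_lt_zero]
  have hsumm : Summable (fun n => LSeries.term (LSeries.logMul 1) (x : ℂ) n) :=
    LSeriesSummable_logMul_of_lt_re habs
  have hterm : ∀ n : ℕ, LSeries.term (LSeries.logMul 1) (x : ℂ) n =
      (((if n = 0 then 0 else Real.log n / (n : ℝ) ^ x : ℝ)) : ℂ) := by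
    intro n
    rcases eq_or_ne n 0 with rfl | hn
    · simp [LSeries.term]
    · rw [LSeries.term_of_ne_zero hn]
      simp only [hn, if_false, LSeries.logMul, Pi.one_apply, mul_one]
      rw [Complex.ofReal_div, ← Complex.ofReal_natCast n,
        Complex.ofReal_cpow (Nat.cast_nonneg n), Complex.ofReal_log (Nat.cast_nonneg n)]
  rw [LSeries, Complex.re_tsum hsumm]
  have hre_eq : ∀ n : ℕ, (LSeries.term (LSeries.logMul 1) (x : ℂ) n).re =
      (if n = 0 then 0 else Real.log n / (n : ℝ) ^ x) := by
    intro n; rw [hterm n, Complex.ofReal_re]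
  have hsumm' : Summable (fun n : ℕ => if n = 0 then (0:ℝ) else Real.log n / (n : ℝ) ^ x) := by
    have := (Complex.hasSum_re hsumm.hasSum).summable
    refine this.congr fun n => (hre_eq n)
  calc (0:ℝ) < ∑' n : ℕ, (if n = 0 then (0:ℝ) else Real.log n / (n : ℝ) ^ x) := by
        refine Summable.tsum_pos hsumm' (fun n => ?_) 2 ?_
        · rcases eq_or_ne n 0 with rfl | hn
          · simp
          · simp only [hn, if_false]
            have : (0:ℝ) ≤ Real.log n := Real.log_natCast_nonneg n
            positivity
        · norm_num
          have h2 : (0:ℝ) < Real.log 2 := Real.log_pos (by norm_num)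
          positivity
    _ = ∑' n : ℕ, (LSeries.term (LSeries.logMul 1) (x : ℂ) n).re := by
        exact (tsum_congr hre_eq).symm

lemma deriv_logGamma_le {x : ℝ} (hx : 0 < x) :
    deriv (Real.log ∘ Real.Gamma) x ≤ Real.log x := by
  have hc : ConvexOn ℝ (Ioi 0) (Real.log ∘ Real.Gamma) := Real.convexOn_log_Gamma
  have hdiff : DifferentiableAt ℝ (Real.log ∘ Real.Gamma) x := by
    refine (Real.differentiableAt_Gamma ?_).log (Real.Gamma_ne_zero ?_) <;>
      exact fun m => ne_of_gt (by have := Nat.cast_nonneg (α := ℝ) m; linarith)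
  have hslope := hc.deriv_le_slope (y := x + 1) (mem_Ioi.mpr hx)
    (mem_Ioi.mpr (by linarith)) (by linarith) hdiff
  refine hslope.trans (le_of_eq ?_)
  rw [slope_def_field, Function.comp_apply, Function.comp_apply, Real.Gamma_add_one hx.ne',
    Real.log_mul hx.ne' (Real.Gamma_pos_of_pos hx).ne']
  field_simp
  ring

/-- The auxiliary function whose strict antitonicity we prove via derivatives. -/
noncomputable def Faux (s : ℝ) : ℝ :=
  -(1 + 2*s) * Real.log (2*π) + Real.log (Real.Gamma (1 + 2*s))
    + Real.log (Real.sin (π*s)) + Real.log (zetaR (1 + 2*s))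

lemma sin_pi_mul_pos {s : ℝ} (h1 : 0 < s) (h2 : s < 1) : 0 < Real.sin (π * s) :=
  Real.sin_pos_of_pos_of_lt_pi (by positivity) (by nlinarith [Real.pi_pos])

lemma Faux_hasDerivAt {s : ℝ} (hs : s ∈ Ioo (1/2 : ℝ) 1) :
    ∃ d : ℝ, d < 0 ∧ HasDerivAt Faux d s := by
  obtain ⟨hs1, hs2⟩ := hs
  set x := 1 + 2*s with hxdef
  have hx2 : 2 < x := by simp [hxdef]; linarith
  have hx3 : x < 3 := by simp [hxdef]; linarith
  have hx0 : 0 < x := by linarith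
  have hx1 : 1 < x := by linarith
  have hinner : HasDerivAt (fun y : ℝ => 1 + 2*y) 2 s := by
    simpa using ((hasDerivAt_id s).const_mul 2).const_add 1
  -- constant term
  have h1 : HasDerivAt (fun y : ℝ => -(1 + 2*y) * Real.log (2*π))
      (-2 * Real.log (2*π)) s := by
    simpa using (hinner.neg.mul_const (Real.log (2*π)))
  -- Gamma term
  have hGdiff : DifferentiableAt ℝ (Real.log ∘ Real.Gamma) x := by
    refine (Real.differentiableAt_Gamma ?_).log (Real.Gamma_ne_zero ?_) <;>
      exact fun m => ne_of_gt (by have := Nat.cast_nonneg (α := ℝ) m; linarith)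
  set ψ := deriv (Real.log ∘ Real.Gamma) x with hψ
  have hG : HasDerivAt (Real.log ∘ Real.Gamma) ψ x := hGdiff.hasDerivAt
  have h2 : HasDerivAt (fun y : ℝ => Real.log (Real.Gamma (1 + 2*y))) (ψ * 2) s :=
    by have := hG.comp s hinner; exact this
  -- sine term
  have hsinpos : 0 < Real.sin (π * s) := sin_pi_mul_pos (by linarith) hs2
  have hmul : HasDerivAt (fun y : ℝ => π * y) π s := by
    simpa using (hasDerivAt_id s).const_mul π
  have hsin : HasDerivAt (fun y : ℝ => Real.sin (π * y)) (Real.cos (π*s) * π) s :=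
    (Real.hasDerivAt_sin (π*s)).comp s hmul
  have h3 : HasDerivAt (fun y : ℝ => Real.log (Real.sin (π * y)))
      ((Real.cos (π*s) * π) / Real.sin (π*s)) s := hsin.log hsinpos.ne'
  -- zeta term
  obtain ⟨d, hd, hzd⟩ := zetaR_hasDerivAt hx1
  have hzcomp : HasDerivAt (fun y : ℝ => zetaR (1 + 2*y)) (d * 2) s := by have := hzd.comp s hinner; exact this
  have hzpos : 0 < zetaR x := zetaR_pos hx1
  have h4 : HasDerivAt (fun y : ℝ => Real.log (zetaR (1 + 2*y)))
      ((d * 2) / zetaR x) s := hzcomp.log hzpos.ne'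
  refine ⟨_, ?_, ((h1.add h2).add h3).add h4⟩
  have hψle : ψ ≤ Real.log x := deriv_logGamma_le hx0
  have hlogx : Real.log x < Real.log (2*π) := by
    have : x < 2*π := by nlinarith [Real.pi_gt_three]
    exact Real.log_lt_log hx0 this
  have hterm12 : -2 * Real.log (2*π) + ψ * 2 < 0 := by nlinarith
  have hterm3 : (Real.cos (π*s) * π) / Real.sin (π*s) ≤ 0 := by
    apply div_nonpos_of_nonpos_of_nonneg _ hsinpos.le
    have hcos : Real.cos (π*s) ≤ 0 := by
      apply Real.cos_nonpos_of_pi_div_two_le_of_le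
      · nlinarith [Real.pi_pos]
      · nlinarith [Real.pi_pos]
    have := Real.pi_pos
    nlinarith
  have hterm4 : (d * 2) / zetaR x < 0 :=
    div_neg_of_neg_of_pos (by linarith) hzpos
  linarith

lemma Faux_strictAntiOn : StrictAntiOn Faux (Ioo (1/2 : ℝ) 1) := by
  refine strictAntiOn_of_deriv_neg (convex_Ioo _ _) ?_ ?_
  · intro s hs
    obtain ⟨d, _, hd⟩ := Faux_hasDerivAt hs
    exact hd.differentiableAt.continuousAt.continuousWithinAt
  · intro s hs
    rw [interior_Ioo] at hs
    obtain ⟨d, hd0, hd⟩ := Faux_hasDerivAt hs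
    rw [hd.deriv]
    exact hd0

/-- Real form of the functional equation on the relevant interval. -/
lemma fe_real {s : ℝ} (hs : s ∈ Ioo (1/2 : ℝ) 1) :
    -2 * zetaR (-2*s) = 4 * Real.exp (Faux s) := by
  obtain ⟨hs1, hs2⟩ := hs
  set x := 1 + 2*s with hxdef
  have hx1 : 1 < x := by simp [hxdef]; linarith
  have hx0 : 0 < x := by linarith
  -- complex functional equation
  have hne : ∀ n : ℕ, ((x : ℝ) : ℂ) ≠ -n := by
    intro n h
    have := congrArg Complex.re h
    simp at this
    have : (0:ℝ) ≤ (n:ℝ) := Nat.cast_nonneg n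
    linarith
  have hne1 : ((x : ℝ) : ℂ) ≠ 1 := by
    intro h
    have := congrArg Complex.re h
    simp at this
    linarith
  have hfe := riemannZeta_one_sub (s := ((x : ℝ) : ℂ)) hne hne1
  have harg : (1 : ℂ) - ((x : ℝ) : ℂ) = (((-2*s : ℝ)) : ℂ) := by
    push_cast [hxdef]; ring
  rw [harg] at hfe
  -- rewrite the right-hand side as a real number
  have hcos : Complex.cos (↑π * ((x:ℝ):ℂ) / 2) = ((-Real.sin (π*s) : ℝ) : ℂ) := by
    have : (↑π * ((x:ℝ):ℂ) / 2) = (((π * x / 2 : ℝ)) : ℂ) := by push_cast; ring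
    rw [this, ← Complex.ofReal_cos]
    congr 1
    have : π * x / 2 = π * s + π / 2 := by rw [hxdef]; ring
    rw [this, Real.cos_add_pi_div_two]
  have hpow : (2 * (π:ℂ)) ^ (-((x:ℝ):ℂ)) = (((2*π : ℝ) ^ (-x) : ℝ) : ℂ) := by
    rw [Complex.ofReal_cpow (by positivity) (-x)]
    push_cast
    ring_nf
  have hgamma : Complex.Gamma ((x:ℝ):ℂ) = ((Real.Gamma x : ℝ) : ℂ) := Complex.Gamma_ofReal x
  have hzeta : riemannZeta ((x:ℝ):ℂ) = ((zetaR x : ℝ) : ℂ) := zeta_ofReal hx1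
  rw [hpow, hgamma, hcos, hzeta] at hfe
  have hval : zetaR (-2*s) = 2 * (2*π) ^ (-x) * Real.Gamma x * (-Real.sin (π*s)) * zetaR x := by
    rw [zetaR, hfe,
      show (2 * (((2*π)^(-x) : ℝ) : ℂ) * ((Real.Gamma x : ℝ) : ℂ) * ((-Real.sin (π*s) : ℝ) : ℂ)
          * ((zetaR x : ℝ) : ℂ))
        = (((2 * (2*π)^(-x) * Real.Gamma x * (-Real.sin (π*s)) * zetaR x : ℝ)) : ℂ) by
        push_cast; ring]
    exact Complex.ofReal_re _
  rw [hval]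
  -- now identify with the exponential form
  have hsinpos : 0 < Real.sin (π * s) := sin_pi_mul_pos (by linarith) hs2
  have hgpos : 0 < Real.Gamma x := Real.Gamma_pos_of_pos hx0
  have hzpos : 0 < zetaR x := zetaR_pos hx1
  have h2pi : (0:ℝ) < 2*π := by positivity
  rw [Faux, Real.exp_add, Real.exp_add, Real.exp_add, Real.exp_log hgpos,
    Real.exp_log hsinpos, Real.exp_log hzpos]
  have hrpow : Real.exp (-(1 + 2*s) * Real.log (2*π)) = (2*π) ^ (-x) := by
    rw [Real.rpow_def_of_pos h2pi]
    congr 1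
    rw [hxdef]; ring
  rw [hrpow, hxdef]
  ring

theorem stmt6 :
    StrictAntiOn (fun s => -2 * zetaR (-2*s)) (Set.Ioo (1/2:ℝ) 1) := by
  intro a ha b hb hab
  simp only
  rw [fe_real ha, fe_real hb]
  have hF := Faux_strictAntiOn ha hb hab
  have := Real.exp_lt_exp.mpr hF
  linarith
end

section
/- The function m(s) := ζ'(2s)/ζ(2s) is strictly increasing on (1/2, 1) and satisfies lim_{s→1/2⁺} m(s) = −∞. -/
open Real Set Filter

/-- The derivative of the Riemann zeta function at real arguments (real part). -/
noncomputable def zetaR' (x : ℝ) : ℝ := (deriv riemannZeta (x : ℂ)).re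

namespace Stmt18Aux

noncomputable def zt (k : ℕ) (x : ℝ) (n : ℕ) : ℝ := (Real.log n)^k / (n:ℝ)^x

noncomputable def Zk (k : ℕ) (x : ℝ) : ℝ := ∑' n, zt k x n

lemma logMul_iterate (k : ℕ) (n : ℕ) :
    (LSeries.logMul)^[k] 1 n = (Complex.log n)^k := by
  induction k with
  | zero => simp
  | succ k ih =>
    rw [Function.iterate_succ', Function.comp_apply, LSeries.logMul, ih, pow_succ]
    ring

lemma zt_nonneg (k : ℕ) (x : ℝ) (n : ℕ) : 0 ≤ zt k x n := by
  unfold zt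
  apply div_nonneg _ (Real.rpow_nonneg (Nat.cast_nonneg n) x)
  exact pow_nonneg (Real.log_natCast_nonneg n) k

lemma term_eq (k : ℕ) {x : ℝ} (hx : 1 < x) (n : ℕ) :
    LSeries.term ((LSeries.logMul)^[k] 1) (x : ℂ) n = ((zt k x n : ℝ) : ℂ) := by
  rcases n with _ | n
  · simp [LSeries.term, zt, Real.zero_rpow (by linarith : x ≠ 0)]
  · rw [LSeries.term_of_ne_zero (Nat.succ_ne_zero n), logMul_iterate]
    rw [zt, Complex.ofReal_div, Complex.ofReal_pow, Complex.natCast_log,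
      Complex.ofReal_cpow (Nat.cast_nonneg _), Complex.ofReal_natCast]

lemma habs (k : ℕ) {x : ℝ} (hx : 1 < x) :
    LSeries.abscissaOfAbsConv ((LSeries.logMul)^[k] 1) < (x:ℂ).re := by
  rw [LSeries.absicssaOfAbsConv_logPowMul, LSeries.abscissaOfAbsConv_one, Complex.ofReal_re]
  exact_mod_cast hx

lemma summable_zt (k : ℕ) {x : ℝ} (hx : 1 < x) : Summable (zt k x) := by
  have h : LSeriesSummable ((LSeries.logMul)^[k] 1) x :=
    LSeriesSummable_of_abscissaOfAbsConv_lt_re (habs k hx)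
  rw [LSeriesSummable] at h
  rw [← Complex.summable_ofReal]
  exact h.congr fun n => (term_eq k hx n)

lemma LSeries_eq (k : ℕ) {x : ℝ} (hx : 1 < x) :
    LSeries ((LSeries.logMul)^[k] 1) (x : ℂ) = ((Zk k x : ℝ) : ℂ) := by
  rw [LSeries, Zk, Complex.ofReal_tsum]
  exact tsum_congr fun n => term_eq k hx n

lemma hev {x : ℝ} (hx : 1 < x) : LSeries 1 =ᶠ[nhds (x:ℂ)] riemannZeta := by
  have hopen : IsOpen {s : ℂ | 1 < s.re} := isOpen_lt continuous_const Complex.continuous_re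
  exact eventually_of_mem (hopen.mem_nhds (by simp [hx])) fun s hs =>
    LSeries_one_eq_riemannZeta hs

lemma zetaR_eq {x : ℝ} (hx : 1 < x) : zetaR x = Zk 0 x := by
  have h := (hev hx).self_of_nhds
  rw [zetaR, ← h]
  have := LSeries_eq 0 hx
  simp only [Function.iterate_zero, id_eq] at this
  rw [this, Complex.ofReal_re]

lemma zetaR'_eq {x : ℝ} (hx : 1 < x) : zetaR' x = -Zk 1 x := by
  rw [zetaR', ← (hev hx).deriv_eq, LSeries_deriv (by simpa using habs 0 hx)]
  have := LSeries_eq 1 hx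
  simp only [Function.iterate_one] at this
  rw [this]
  simp

lemma zetaR''_eq {x : ℝ} (hx : 1 < x) :
    (deriv (deriv riemannZeta) (x:ℂ)).re = Zk 2 x := by
  have h2 : deriv (deriv riemannZeta) (x:ℂ) = deriv (deriv (LSeries 1)) (x:ℂ) :=
    ((hev hx).deriv).symm.deriv_eq
  have h3 : deriv (deriv (LSeries 1)) (x:ℂ) = iteratedDeriv 2 (LSeries 1) (x:ℂ) := by
    rw [iteratedDeriv_succ, iteratedDeriv_one]
  rw [h2, h3, LSeries_iteratedDeriv 2 (by simpa using habs 0 hx), LSeries_eq 2 hx]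
  simp

lemma hasDerivAt_zetaR {x : ℝ} (hx : 1 < x) : HasDerivAt zetaR (zetaR' x) x := by
  have h1 : (x:ℂ) ≠ 1 := by
    simpa using (by intro h; rw [h] at hx; linarith : x ≠ 1)
  exact ((differentiableAt_riemannZeta h1).hasDerivAt).real_of_complex

lemma hasDerivAt_zetaR' {x : ℝ} (hx : 1 < x) :
    HasDerivAt zetaR' ((deriv (deriv riemannZeta) (x:ℂ)).re) x := by
  have h1 : (x:ℂ) ≠ 1 := by
    simpa using (by intro h; rw [h] at hx; linarith : x ≠ 1)
  have hdo : DifferentiableOn ℂ riemannZeta {s : ℂ | s ≠ 1} :=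
    fun s hs => (differentiableAt_riemannZeta hs).differentiableWithinAt
  have han : AnalyticOnNhd ℂ riemannZeta {s : ℂ | s ≠ 1} := hdo.analyticOnNhd isOpen_ne
  have : AnalyticAt ℂ (deriv riemannZeta) (x:ℂ) := han.deriv (x:ℂ) h1
  exact (this.differentiableAt.hasDerivAt).real_of_complex

lemma Z0_pos {x : ℝ} (hx : 1 < x) : 0 < Zk 0 x := by
  refine Summable.tsum_pos (summable_zt 0 hx) (zt_nonneg 0 x) 1 ?_
  simp [zt]

lemma key {x : ℝ} (hx : 1 < x) : (Zk 1 x)^2 < Zk 0 x * Zk 2 x := by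
  set a := zt 0 x with ha_def
  set b := zt 1 x with hb_def
  set c := zt 2 x with hc_def
  have ha := summable_zt 0 hx
  have hb := summable_zt 1 hx
  have hc := summable_zt 2 hx
  have h0a : ∀ n, 0 ≤ a n := zt_nonneg 0 x
  have h0b : ∀ n, 0 ≤ b n := zt_nonneg 1 x
  have h0c : ∀ n, 0 ≤ c n := zt_nonneg 2 x
  have norm_of (f : ℕ → ℝ) (hf : ∀ n, 0 ≤ f n) (h : Summable f) :
      Summable fun n => ‖f n‖ := by
    simpa [Real.norm_eq_abs, abs_of_nonneg, hf] using h.congr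
      (fun n => (abs_of_nonneg (hf n)).symm)
  have E1 : Zk 0 x * Zk 2 x = ∑' p : ℕ × ℕ, a p.1 * c p.2 :=
    tsum_mul_tsum_of_summable_norm (norm_of a h0a ha) (norm_of c h0c hc)
  have E2 : (Zk 1 x)^2 = ∑' p : ℕ × ℕ, b p.1 * b p.2 := by
    rw [pow_two]
    exact tsum_mul_tsum_of_summable_norm (norm_of b h0b hb) (norm_of b h0b hb)
  have Sac : Summable fun p : ℕ × ℕ => a p.1 * c p.2 := ha.mul_of_nonneg hc h0a h0c
  have Sbb : Summable fun p : ℕ × ℕ => b p.1 * b p.2 := hb.mul_of_nonneg hb h0b h0b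
  have Sca : Summable fun p : ℕ × ℕ => a p.2 * c p.1 := by
    have := hc.mul_of_nonneg ha h0c h0a
    exact this.congr fun p => mul_comm _ _
  have hD : Zk 0 x * Zk 2 x - (Zk 1 x)^2 = ∑' p : ℕ × ℕ, (a p.1 * c p.2 - b p.1 * b p.2) := by
    rw [E1, E2, ← Summable.tsum_sub Sac Sbb]
  have hswap : (∑' p : ℕ × ℕ, (a p.1 * c p.2 - b p.1 * b p.2))
      = ∑' p : ℕ × ℕ, (a p.2 * c p.1 - b p.2 * b p.1) :=
    ((Equiv.prodComm ℕ ℕ).tsum_eq fun p : ℕ × ℕ => a p.1 * c p.2 - b p.1 * b p.2).symm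
  have hpt : ∀ p : ℕ × ℕ, (a p.1 * c p.2 - b p.1 * b p.2) + (a p.2 * c p.1 - b p.2 * b p.1)
      = (Real.log p.1 - Real.log p.2)^2 / ((p.1:ℝ)^x * (p.2:ℝ)^x) := by
    rintro ⟨m, n⟩
    simp only [ha_def, hb_def, hc_def, zt, pow_zero, pow_one]
    rw [div_mul_div_comm, div_mul_div_comm, div_mul_div_comm, div_mul_div_comm,
      one_mul, one_mul, mul_comm ((n:ℝ)^x) ((m:ℝ)^x)]
    rw [div_sub_div_same, div_sub_div_same, ← add_div]
    congr 1
    ring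
  have Ssum : Summable fun p : ℕ × ℕ =>
      (a p.1 * c p.2 - b p.1 * b p.2) + (a p.2 * c p.1 - b p.2 * b p.1) := by
    refine (Sac.sub Sbb).add (Sca.sub ?_)
    exact Sbb.congr fun p => mul_comm _ _
  have hpos : 0 < ∑' p : ℕ × ℕ,
      ((a p.1 * c p.2 - b p.1 * b p.2) + (a p.2 * c p.1 - b p.2 * b p.1)) := by
    refine Summable.tsum_pos Ssum (fun p => ?_) (1, 2) ?_
    · rw [hpt p]; positivity
    · rw [hpt (1, 2)]
      have hl2 : (0:ℝ) < Real.log 2 := Real.log_pos one_lt_two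
      have h2x : (0:ℝ) < (2:ℝ)^x := by positivity
      simp only [Nat.cast_one, Nat.cast_ofNat, Real.log_one]
      rw [Real.one_rpow, one_mul]
      exact div_pos (by nlinarith) h2x
  have h2D : Zk 0 x * Zk 2 x - (Zk 1 x)^2
      = (1/2) * ∑' p : ℕ × ℕ,
        ((a p.1 * c p.2 - b p.1 * b p.2) + (a p.2 * c p.1 - b p.2 * b p.1)) := by
    rw [Summable.tsum_add (Sac.sub Sbb) (Sca.sub (Sbb.congr fun p => mul_comm _ _)), ← hswap, ← hD]
    ring
  nlinarith [hpos, h2D]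

lemma zetaR_pos {x : ℝ} (hx : 1 < x) : 0 < zetaR x := by
  rw [zetaR_eq hx]; exact Z0_pos hx

lemma g_hasDeriv {x : ℝ} (hx : 1 < x) :
    HasDerivAt (fun y => zetaR' y / zetaR y)
      (((deriv (deriv riemannZeta) (x:ℂ)).re * zetaR x - zetaR' x * zetaR' x) / zetaR x ^ 2) x :=
  (hasDerivAt_zetaR' hx).div (hasDerivAt_zetaR hx) (ne_of_gt (zetaR_pos hx))

lemma deriv_g_pos {x : ℝ} (hx : 1 < x) :
    0 < deriv (fun y => zetaR' y / zetaR y) x := by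
  rw [(g_hasDeriv hx).deriv]
  have h0 := Z0_pos hx
  have hk := key hx
  rw [zetaR''_eq hx, zetaR_eq hx, zetaR'_eq hx]
  apply div_pos
  · nlinarith
  · positivity

lemma mono : StrictMonoOn (fun y => zetaR' y / zetaR y) (Ioo (1:ℝ) 2) := by
  refine strictMonoOn_of_deriv_pos (convex_Ioo 1 2)
    (fun x hx => ((g_hasDeriv hx.1).continuousAt).continuousWithinAt) ?_
  intro x hx
  rw [interior_Ioo] at hx
  exact deriv_g_pos hx.1

lemma zeta_tendsto : Tendsto zetaR (nhdsWithin 1 (Ioi (1:ℝ))) atTop := by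
  have hmap : Tendsto (fun x : ℝ => (x:ℂ)) (nhdsWithin 1 (Ioi (1:ℝ)))
      (nhdsWithin 1 {(1:ℂ)}ᶜ) := by
    rw [tendsto_nhdsWithin_iff]
    constructor
    · exact ((Complex.continuous_ofReal.tendsto 1).mono_left nhdsWithin_le_nhds)
    · filter_upwards [self_mem_nhdsWithin] with x hx
      simp only [Set.mem_compl_iff, Set.mem_singleton_iff]
      intro h
      have : x = 1 := by exact_mod_cast h
      rw [this] at hx
      exact lt_irrefl 1 (Set.mem_Ioi.mp hx)
  have h1 : Tendsto (fun x : ℝ => ((x:ℂ) - 1) * riemannZeta x)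
      (nhdsWithin 1 (Ioi (1:ℝ))) (nhds 1) := riemannZeta_residue_one.comp hmap
  have h2 : Tendsto (fun x : ℝ => (x - 1) * zetaR x) (nhdsWithin 1 (Ioi (1:ℝ))) (nhds 1) := by
    have h := (Complex.continuous_re.tendsto 1).comp h1
    simp only [Complex.one_re] at h
    refine h.congr fun x => ?_
    show (((x:ℂ) - 1) * riemannZeta x).re = (x - 1) * zetaR x
    rw [show ((x:ℂ) - 1) = ((x - 1 : ℝ) : ℂ) by push_cast; ring, Complex.re_ofReal_mul]
    rfl
  have h3 : Tendsto (fun x : ℝ => (x - 1)⁻¹) (nhdsWithin 1 (Ioi (1:ℝ))) atTop := by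
    refine tendsto_inv_nhdsGT_zero.comp ?_
    rw [tendsto_nhdsWithin_iff]
    constructor
    · have h : Tendsto (fun x : ℝ => x - 1) (nhds 1) (nhds 0) := by
        have h0 : Continuous (fun x : ℝ => x - 1) := by continuity
        simpa using h0.tendsto (1:ℝ)
      exact h.mono_left nhdsWithin_le_nhds
    · filter_upwards [self_mem_nhdsWithin] with x hx
      simp only [Set.mem_Ioi] at hx ⊢
      linarith
  have h4 : Tendsto (fun x : ℝ => (x - 1)⁻¹ * ((x - 1) * zetaR x))
      (nhdsWithin 1 (Ioi (1:ℝ))) atTop := h3.atTop_mul_pos one_pos h2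
  refine h4.congr' ?_
  filter_upwards [self_mem_nhdsWithin] with x hx
  have hne : x - 1 ≠ 0 := by simp only [Set.mem_Ioi] at hx; intro h; linarith
  field_simp

lemma g_tendsto : Tendsto (fun x => zetaR' x / zetaR x) (nhdsWithin 1 (Ioi (1:ℝ))) atBot := by
  set L := fun x : ℝ => Real.log (zetaR x) with hL_def
  set K := L (3/2 : ℝ) with hK_def
  have log_tendsto : Tendsto L (nhdsWithin 1 (Ioi (1:ℝ))) atTop :=
    Real.tendsto_log_atTop.comp zeta_tendsto
  have hLd : ∀ y ∈ Ioo (1:ℝ) 2, HasDerivAt L (zetaR' y / zetaR y) y := fun y hy =>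
    (hasDerivAt_zetaR hy.1).log (ne_of_gt (zetaR_pos hy.1))
  have hev : ∀ᶠ x in nhdsWithin 1 (Ioi (1:ℝ)), zetaR' x / zetaR x ≤ 2 * (K - L x) := by
    filter_upwards [Ioo_mem_nhdsGT_of_mem (show (1:ℝ) ∈ Ico (1:ℝ) (5/4) by norm_num),
      log_tendsto.eventually_ge_atTop K] with x hx1 hx2
    have hx1' : 1 < x := hx1.1
    have hx54 : x < 5/4 := hx1.2
    have hxlt : x < 3/2 := by linarith
    obtain ⟨c, hc, hslope⟩ := exists_hasDerivAt_eq_slope L (fun y => zetaR' y / zetaR y)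
      hxlt
      (fun y hy => ((hLd y ⟨lt_of_lt_of_le hx1' hy.1, lt_of_le_of_lt hy.2 (by norm_num)⟩
        ).continuousAt).continuousWithinAt)
      (fun y hy => hLd y ⟨lt_trans hx1' hy.1, lt_trans hy.2 (by norm_num)⟩)
    have hmem_x : x ∈ Ioo (1:ℝ) 2 := ⟨hx1', by linarith⟩
    have hmem_c : c ∈ Ioo (1:ℝ) 2 := ⟨lt_trans hx1' hc.1, by linarith [hc.2]⟩
    have hlt : zetaR' x / zetaR x < zetaR' c / zetaR c := mono hmem_x hmem_c hc.1
    have hnum : K - L x ≤ 0 := by linarith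
    have hdpos : (0:ℝ) < 3/2 - x := by linarith
    have hd1 : (3/2 - x) * (3/2 - x)⁻¹ = 1 := mul_inv_cancel₀ (ne_of_gt hdpos)
    have h2d : (2:ℝ) ≤ (3/2 - x)⁻¹ := by nlinarith [inv_pos.mpr hdpos]
    have hb : (K - L x) * (3/2 - x)⁻¹ ≤ (K - L x) * 2 :=
      mul_le_mul_of_nonpos_left h2d hnum
    have : zetaR' c / zetaR c = (K - L x) * (3/2 - x)⁻¹ := by
      rw [hslope, hK_def, div_eq_mul_inv]
    linarith
  have htend : Tendsto (fun x => 2 * (K - L x)) (nhdsWithin 1 (Ioi (1:ℝ))) atBot := by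
    have h1 : Tendsto (fun x => -L x) (nhdsWithin 1 (Ioi (1:ℝ))) atBot :=
      tendsto_neg_atTop_atBot.comp log_tendsto
    have h2 : Tendsto (fun x => K + -L x) (nhdsWithin 1 (Ioi (1:ℝ))) atBot :=
      tendsto_atBot_add_const_left _ K h1
    have h3 : Tendsto (fun x => 2 * (K + -L x)) (nhdsWithin 1 (Ioi (1:ℝ))) atBot := by
      exact (tendsto_const_mul_atBot_of_pos (by norm_num : (0:ℝ) < 2)).mpr h2
    exact h3.congr fun x => by ring
  exact tendsto_atBot_mono' _ hev htend

end Stmt18Aux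

theorem stmt18 :
    StrictMonoOn (fun s => zetaR' (2*s) / zetaR (2*s)) (Set.Ioo (1/2:ℝ) 1) ∧
    Filter.Tendsto (fun s => zetaR' (2*s) / zetaR (2*s))
      (nhdsWithin (1/2) (Set.Ioi (1/2))) Filter.atBot := by
  constructor
  · intro s hs t ht hst
    have h2s : 2*s ∈ Ioo (1:ℝ) 2 := ⟨by linarith [hs.1], by linarith [hs.2]⟩
    have h2t : 2*t ∈ Ioo (1:ℝ) 2 := ⟨by linarith [ht.1], by linarith [ht.2]⟩
    exact Stmt18Aux.mono h2s h2t (by linarith)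
  · have hcomp : Tendsto (fun s : ℝ => 2*s) (nhdsWithin (1/2) (Set.Ioi (1/2:ℝ)))
        (nhdsWithin 1 (Set.Ioi (1:ℝ))) := by
      rw [tendsto_nhdsWithin_iff]
      constructor
      · have : Tendsto (fun s : ℝ => 2*s) (nhds (1/2)) (nhds (2 * (1/2))) :=
          (continuous_const.mul continuous_id).tendsto (1/2:ℝ)
        simpa using this.mono_left nhdsWithin_le_nhds
      · filter_upwards [self_mem_nhdsWithin] with s hs
        simp only [Set.mem_Ioi] at hs ⊢
        linarith
    exact Stmt18Aux.g_tendsto.comp hcomp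
end
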